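/- There exists ε > 0 such that for all real numbers a, x, y, δ with a > 1, x > y > 1 and 0 < δ < ε, at least one of the following two strict inequalities holds: sinSqAngle((x − 1, y, 1), (−1, a, 1), (−1, a + δ, 1)) > sinSqAngle((x, y, 1), (0, a, 1), (0, a + δ, 1)), or sinSqAngle((x, y − 1, 1), (0, a − 1, 1), (0, a + δ − 1, 1)) > sinSqAngle((x, y, 1), (0, a, 1), (0, a + δ, 1)). In other words, the pair of Jacobi–Perron transformations {V₁,₀;₀, V₀,₁;₀}, acting on coordinates by (X, Y, Z) ↦ (X − Z, Y, Z) and (X, Y, Z) ↦ (X, Y − Z, Z) respectively, p-max-asymptotically increases sin²α on the domain {(a, x, y) : a > 1, x > y > 1}. -/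

import Mathlib

/-!
Since `(u × v) × (u × w) = ⟨u, v × w⟩ u`, we have
`sinSqAngle u v w = ⟨u, v × w⟩² ‖u‖² / (‖u × v‖² ‖u × w‖²)`, and both Jacobi–Perron maps have
determinant one, so they preserve the triple product. Writing `N = ‖ξ‖²`, `G(b) = ‖ξ × (0, b, 1)‖²`
and `N'`, `G'` for the transformed quantities, `sin²α` increases as soon as
`N G'(b)² < N' G(b)²` for both `b = a` and `b = a + δ`. This holds for `X ↦ X - Z` when
`b ≥ x + y`, and for `Y ↦ Y - Z` when `1 < b ≤ x + y + 1`; with `ε = 1` one of the two maps works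
for both planes. Each per-plane inequality follows from `(N - N') G' ≤ 2 N' (G - G')`, a polynomial
inequality with nonnegative coefficients in `y - 1`, `x - y` and the distance of `b` to the
relevant endpoint.
-/

noncomputable section

/-- Cross product on `ℝ³`. -/
def cross3 (u v : Fin 3 → ℝ) : Fin 3 → ℝ :=
  ![u 1 * v 2 - u 2 * v 1, u 2 * v 0 - u 0 * v 2, u 0 * v 1 - u 1 * v 0]

/-- Squared Euclidean norm on `ℝ³`. -/
def normSq3 (v : Fin 3 → ℝ) : ℝ := v 0 ^ 2 + v 1 ^ 2 + v 2 ^ 2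

/-- Squared sine of the angle between the plane spanned by `u, v` and the plane
spanned by `u, w`. -/
def sinSqAngle (u v w : Fin 3 → ℝ) : ℝ :=
  normSq3 (cross3 (cross3 u v) (cross3 u w)) /
    (normSq3 (cross3 u v) * normSq3 (cross3 u w))

open Matrix

section CrossProduct

variable {R : Type*} [CommRing R] {u v w : Fin 3 → R}

theorem cross_cross_cross_eq_smul (u v w : Fin 3 → R) :
    u ⨯₃ v ⨯₃ (u ⨯₃ w) = (u ⬝ᵥ v ⨯₃ w) • u := by
  rw [cross_cross_eq_smul_sub_smul, dot_self_cross, zero_smul, zero_sub, ← neg_smul,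
    triple_product_permutation v, ← cross_anticomm, dotProduct_neg, neg_neg]

theorem ne_zero_of_dotProduct_cross_ne_zero (h : u ⬝ᵥ v ⨯₃ w ≠ 0) : u ≠ 0 := by
  rintro rfl
  simp at h

theorem cross_ne_zero_of_dotProduct_cross_ne_zero_left (h : u ⬝ᵥ v ⨯₃ w ≠ 0) :
    u ⨯₃ v ≠ 0 := by
  rw [triple_product_permutation, triple_product_permutation] at h
  rintro h₀
  simp [h₀] at h

theorem cross_ne_zero_of_dotProduct_cross_ne_zero_right (h : u ⬝ᵥ v ⨯₃ w ≠ 0) :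
    u ⨯₃ w ≠ 0 := by
  rw [triple_product_permutation, ← cross_anticomm] at h
  rintro h₀
  simp [h₀] at h

theorem dotProduct_cross_vec3_one (p q c a b : R) :
    ![p, q, 1] ⬝ᵥ ![c, a, 1] ⨯₃ ![c, b, 1] = (p - c) * (a - b) := by
  simp only [cross_apply, vec3_dotProduct, cons_val_zero, cons_val_one, cons_val_two,
    head_cons, tail_cons]
  ring

end CrossProduct

theorem cross3_eq_crossProduct (u v : Fin 3 → ℝ) : cross3 u v = u ⨯₃ v := rfl

theorem normSq3_eq_dotProduct (v : Fin 3 → ℝ) : normSq3 v = v ⬝ᵥ v := by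
  simp only [normSq3, vec3_dotProduct]
  ring

theorem normSq3_pos {v : Fin 3 → ℝ} (hv : v ≠ 0) : 0 < normSq3 v := by
  rw [normSq3_eq_dotProduct]
  exact (dotProduct_self_star_nonneg v).lt_of_ne' (dotProduct_self_eq_zero.not.mpr hv)

theorem normSq3_smul (c : ℝ) (v : Fin 3 → ℝ) : normSq3 (c • v) = c ^ 2 * normSq3 v := by
  simp only [normSq3, Pi.smul_apply, smul_eq_mul]
  ring

theorem sinSqAngle_eq (u v w : Fin 3 → ℝ) :
    sinSqAngle u v w =
      (u ⬝ᵥ v ⨯₃ w) ^ 2 * (normSq3 u / (normSq3 (u ⨯₃ v) * normSq3 (u ⨯₃ w))) := by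
  rw [sinSqAngle, cross3_eq_crossProduct, cross3_eq_crossProduct, cross3_eq_crossProduct,
    cross_cross_cross_eq_smul, normSq3_smul, mul_div_assoc]

section Inequalities

variable {K : Type*} [Field K] [LinearOrder K] [IsStrictOrderedRing K]

theorem div_mul_lt_div_mul_of_mul_sq_lt {N N' G₁ G₂ G₁' G₂' : K} (hN : 0 < N)
    (hG₁ : 0 < G₁) (hG₂ : 0 < G₂) (hG₁' : 0 < G₁') (hG₂' : 0 < G₂')
    (h₁ : N * G₁' ^ 2 < N' * G₁ ^ 2) (h₂ : N * G₂' ^ 2 < N' * G₂ ^ 2) :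
    N / (G₁ * G₂) < N' / (G₁' * G₂') := by
  have hN' : 0 < N' :=
    pos_of_mul_pos_left ((by positivity : 0 < N * G₁' ^ 2).trans h₁) (sq_nonneg _)
  rw [div_lt_div_iff₀ (by positivity) (by positivity)]
  refine lt_of_pow_lt_pow_left₀ 2 (by positivity) ?_
  calc (N * (G₁' * G₂')) ^ 2 = (N * G₁' ^ 2) * (N * G₂' ^ 2) := by ring
    _ < (N' * G₁ ^ 2) * (N' * G₂ ^ 2) := mul_lt_mul'' h₁ h₂ (by positivity) (by positivity)
    _ = (N' * (G₁ * G₂)) ^ 2 := by ring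

/-- `N G'² = N' G'² + (N - N') G'²  ≤ N' G'² + 2 N' (G - G') G' = N' (G² - (G - G')²)`. -/
theorem mul_sq_lt_of_sub_mul_le {N N' G G' : K} (hN' : 0 < N') (hG' : 0 ≤ G') (hGG' : G' < G)
    (h : (N - N') * G' ≤ 2 * N' * (G - G')) : N * G' ^ 2 < N' * G ^ 2 := by
  nlinarith [mul_pos hN' (pow_pos (sub_pos.mpr hGG') 2)]

end Inequalities

theorem sinSqAngle_lt_sinSqAngle {u v w u' v' w' : Fin 3 → ℝ}
    (hdet : u' ⬝ᵥ v' ⨯₃ w' = u ⬝ᵥ v ⨯₃ w) (hdet₀ : u ⬝ᵥ v ⨯₃ w ≠ 0)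
    (hv : normSq3 u * normSq3 (u' ⨯₃ v') ^ 2 < normSq3 u' * normSq3 (u ⨯₃ v) ^ 2)
    (hw : normSq3 u * normSq3 (u' ⨯₃ w') ^ 2 < normSq3 u' * normSq3 (u ⨯₃ w) ^ 2) :
    sinSqAngle u v w < sinSqAngle u' v' w' := by
  have hdet₀' : u' ⬝ᵥ v' ⨯₃ w' ≠ 0 := hdet ▸ hdet₀
  rw [sinSqAngle_eq, sinSqAngle_eq, hdet]
  refine mul_lt_mul_of_pos_left ?_ (by positivity)
  exact div_mul_lt_div_mul_of_mul_sq_lt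
    (normSq3_pos (ne_zero_of_dotProduct_cross_ne_zero hdet₀))
    (normSq3_pos (cross_ne_zero_of_dotProduct_cross_ne_zero_left hdet₀))
    (normSq3_pos (cross_ne_zero_of_dotProduct_cross_ne_zero_right hdet₀))
    (normSq3_pos (cross_ne_zero_of_dotProduct_cross_ne_zero_left hdet₀'))
    (normSq3_pos (cross_ne_zero_of_dotProduct_cross_ne_zero_right hdet₀')) hv hw

theorem shiftX_key_ineq {x y b : ℝ} (hy : 1 ≤ y) (hxy : y ≤ x) (hb : x + y ≤ b) :
    (2 * x - 1) * ((y - b) ^ 2 + x ^ 2 + (b * (x - 1) + y) ^ 2) ≤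
      2 * ((x - 1) ^ 2 + y ^ 2 + 1) * ((b - y) * (2 * b * x - b + y)) := by
  obtain ⟨r, hr, rfl⟩ : ∃ r, 0 ≤ r ∧ y = 1 + r := ⟨y - 1, by linarith, by ring⟩
  obtain ⟨s, hs, rfl⟩ : ∃ s, 0 ≤ s ∧ x = 1 + r + s := ⟨x - (1 + r), by linarith, by ring⟩
  obtain ⟨t, ht, rfl⟩ : ∃ t, 0 ≤ t ∧ b = 1 + r + s + (1 + r) + t :=
    ⟨b - (1 + r + s + (1 + r)), by linarith, by ring⟩
  rw [← sub_nonneg]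
  ring_nf
  positivity

theorem shiftY_key_ineq {x y b : ℝ} (hy : 1 ≤ y) (hxy : y ≤ x) (hb₁ : 1 ≤ b)
    (hb₂ : b ≤ x + y + 1) :
    (2 * y - 1) * ((y - b) ^ 2 + x ^ 2 + ((b - 1) * x) ^ 2) ≤
      2 * (x ^ 2 + (y - 1) ^ 2 + 1) * (x ^ 2 * (2 * b - 1)) := by
  -- The difference is concave in `b`; after removing its curvature term, which is nonnegative
  -- on `[1, x + y + 1]`, what remains has nonnegative coefficients in `y - 1`, `x - y`, `b - 1`.
  have hcurv : 0 ≤ (2 * y - 1) * (1 + x ^ 2) * ((b - 1) * (x + y + 1 - b)) :=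
    mul_nonneg (mul_nonneg (by linarith) (by positivity)) (mul_nonneg (by linarith) (by linarith))
  suffices 0 ≤ 2 * (x ^ 2 + (y - 1) ^ 2 + 1) * (x ^ 2 * (2 * b - 1))
      - (2 * y - 1) * ((y - b) ^ 2 + x ^ 2 + ((b - 1) * x) ^ 2)
      - (2 * y - 1) * (1 + x ^ 2) * ((b - 1) * (x + y + 1 - b)) by linarith
  obtain ⟨r, hr, rfl⟩ : ∃ r, 0 ≤ r ∧ y = 1 + r := ⟨y - 1, by linarith, by ring⟩
  obtain ⟨s, hs, rfl⟩ : ∃ s, 0 ≤ s ∧ x = 1 + r + s := ⟨x - (1 + r), by linarith, by ring⟩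
  obtain ⟨u, hu, rfl⟩ : ∃ u, 0 ≤ u ∧ b = 1 + u := ⟨b - 1, by linarith, by ring⟩
  ring_nf
  positivity

theorem shiftX_normSq_mul_sq_lt {x y b : ℝ} (hy : 1 < y) (hxy : y < x) (hb : x + y ≤ b) :
    normSq3 ![x, y, 1] * normSq3 (![x - 1, y, 1] ⨯₃ ![-1, b, 1]) ^ 2 <
      normSq3 ![x - 1, y, 1] * normSq3 (![x, y, 1] ⨯₃ ![0, b, 1]) ^ 2 := by
  simp only [normSq3, cross_apply, cons_val_zero, cons_val_one, cons_val_two, head_cons,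
    tail_cons]
  refine mul_sq_lt_of_sub_mul_le (by positivity) (by positivity) ?_ ?_
  · have : 0 < (b - y) * (2 * b * x - b + y) := mul_pos (by linarith) (by nlinarith)
    linarith
  · linarith [shiftX_key_ineq hy.le hxy.le hb]

theorem shiftY_normSq_mul_sq_lt {x y b : ℝ} (hy : 1 < y) (hxy : y < x) (hb₁ : 1 < b)
    (hb₂ : b ≤ x + y + 1) :
    normSq3 ![x, y, 1] * normSq3 (![x, y - 1, 1] ⨯₃ ![0, b - 1, 1]) ^ 2 <
      normSq3 ![x, y - 1, 1] * normSq3 (![x, y, 1] ⨯₃ ![0, b, 1]) ^ 2 := by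
  simp only [normSq3, cross_apply, cons_val_zero, cons_val_one, cons_val_two, head_cons,
    tail_cons]
  refine mul_sq_lt_of_sub_mul_le (by positivity) (by positivity) ?_ ?_
  · have : 0 < x ^ 2 * (2 * b - 1) := mul_pos (by nlinarith) (by linarith)
    linarith
  · linarith [shiftY_key_ineq hy.le hxy.le hb₁.le hb₂]

theorem stmt19 :
    ∃ ε > (0 : ℝ), ∀ a x y δ : ℝ, a > 1 → x > y → y > 1 → 0 < δ → δ < ε →
      (sinSqAngle ![x - 1, y, 1] ![-1, a, 1] ![-1, a + δ, 1] >
          sinSqAngle ![x, y, 1] ![0, a, 1] ![0, a + δ, 1]) ∨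
      (sinSqAngle ![x, y - 1, 1] ![0, a - 1, 1] ![0, a + δ - 1, 1] >
          sinSqAngle ![x, y, 1] ![0, a, 1] ![0, a + δ, 1]) := by
  refine ⟨1, one_pos, fun a x y δ ha hxy hy hδ hδ₁ => ?_⟩
  have hdet₀ : ![x, y, 1] ⬝ᵥ ![0, a, 1] ⨯₃ ![0, a + δ, 1] ≠ 0 := by
    rw [dotProduct_cross_vec3_one]
    exact mul_ne_zero (by linarith) (by linarith)
  rcases le_or_gt (x + y) a with hxya | hxya
  · left
    refine sinSqAngle_lt_sinSqAngle ?_ hdet₀ (shiftX_normSq_mul_sq_lt hy hxy hxya)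
      (shiftX_normSq_mul_sq_lt hy hxy (by linarith))
    rw [dotProduct_cross_vec3_one, dotProduct_cross_vec3_one]
    ring
  · right
    refine sinSqAngle_lt_sinSqAngle ?_ hdet₀ (shiftY_normSq_mul_sq_lt hy hxy ha (by linarith))
      (shiftY_normSq_mul_sq_lt hy hxy (by linarith) (by linarith))
    rw [dotProduct_cross_vec3_one, dotProduct_cross_vec3_one]
    ring
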